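/- Let Γ be a countable discrete group and ρ : Γ → O(H) an orthogonal representation. Then the complexification ρ_ℂ embeds into a countable direct sum of copies of the complex left regular representation λ_Γ if and only if ρ embeds into a countable direct sum of copies of the real left regular representation λ_{Γ,ℝ}. -/

import Mathlib

open scoped ENNReal

section
variable {Γ : Type*} [Group Γ] (𝕜 : Type*) [RCLike 𝕜]

lemma shift_memℓp (g : Γ) (f : lp (fun _ : Γ => 𝕜) 2) :
    Memℓp (fun h => f (g * h)) 2 := by
  have hf := lp.memℓp f
  rw [memℓp_gen_iff (by norm_num)] at hf ⊢
  exact ((Equiv.mulLeft g).summable_iff (f := fun h => ‖f h‖ ^ (2 : ℝ≥0∞).toReal)).2 hf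

variable {𝕜} in
/-- The left translation `(λ(g)ξ)(h) = ξ(g⁻¹h)` on `ℓ²(Γ, 𝕜)`. -/
noncomputable def leftTranslation (g : Γ) :
    lp (fun _ : Γ => 𝕜) 2 ≃ₗᵢ[𝕜] lp (fun _ : Γ => 𝕜) 2 where
  toFun f := ⟨fun h => f (g⁻¹ * h), shift_memℓp 𝕜 g⁻¹ f⟩
  invFun f := ⟨fun h => f (g * h), shift_memℓp 𝕜 g f⟩
  map_add' f₁ f₂ := by ext h; rfl
  map_smul' c f := by ext h; rfl
  left_inv f := by ext h; simp [inv_mul_cancel_left]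
  right_inv f := by ext h; simp [mul_inv_cancel_left]
  norm_map' f := by
    rw [lp.norm_eq_tsum_rpow (by norm_num), lp.norm_eq_tsum_rpow (by norm_num)]
    congr 1
    exact (Equiv.mulLeft g⁻¹).tsum_eq (fun h => ‖f h‖ ^ (2 : ℝ≥0∞).toReal)

/-- The left regular representation of `Γ` on `ℓ²(Γ, 𝕜)`. -/
noncomputable def leftRegularRep :
    Γ →* (lp (fun _ : Γ => 𝕜) 2 ≃ₗᵢ[𝕜] lp (fun _ : Γ => 𝕜) 2) where
  toFun := leftTranslation
  map_one' := by
    apply LinearIsometryEquiv.ext; intro f; ext h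
    show (f : ∀ _ : Γ, 𝕜) ((1 : Γ)⁻¹ * h) = f h
    simp
  map_mul' g₁ g₂ := by
    apply LinearIsometryEquiv.ext; intro f; ext h
    show (f : ∀ _ : Γ, 𝕜) ((g₁ * g₂)⁻¹ * h) = (f : ∀ _ : Γ, 𝕜) (g₂⁻¹ * (g₁⁻¹ * h))
    simp [mul_assoc]

variable {E₁ E₂ : Type*}
  [NormedAddCommGroup E₁] [InnerProductSpace 𝕜 E₁]
  [NormedAddCommGroup E₂] [InnerProductSpace 𝕜 E₂]


/-- `ρ₁ ≪ ρ₂`: `ρ₁` embeds `Γ`-equivariantly and isometrically into the countable direct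
sum `ρ₂^{⊕∞}` acting on `ℓ²(ℕ; E₂)`. -/
def AbsContinuousReps (ρ₁ : Γ →* (E₁ ≃ₗᵢ[𝕜] E₁)) (ρ₂ : Γ →* (E₂ ≃ₗᵢ[𝕜] E₂)) : Prop :=
  ∃ Φ : E₁ →ₗᵢ[𝕜] lp (fun _ : ℕ => E₂) 2,
    ∀ (g : Γ) (v : E₁) (n : ℕ),
      (Φ (ρ₁ g v) : ∀ _ : ℕ, E₂) n = ρ₂ g ((Φ v : ∀ _ : ℕ, E₂) n)

/-!
A complex embedding `Ψ` of `ρ_ℂ` into `λ_Γ^{⊕∞}` gives a real one for `ρ`: restrict `Ψ` to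
`H ⊆ H_ℂ` and split every coordinate in `ℓ²(Γ, ℂ)` into its real and imaginary parts, which are
two coordinates in `ℓ²(Γ, ℝ)` (placed at even and odd indices). Conversely a real embedding `Φ`
of `ρ` into `λ_{Γ,ℝ}^{⊕∞}` complexifies to `u + i v ↦ Φ u + i Φ v`, because
`ℓ²(ℕ, ℓ²(Γ, ℂ))` is the complexification of `ℓ²(ℕ, ℓ²(Γ, ℝ))`, and in any complexification
`‖u + i v‖² = ‖u‖² + ‖v‖²`.
-/

section lpTwo

variable {α : Type*} {E : α → Type*} [∀ i, NormedAddCommGroup (E i)]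

theorem memℓp_two_iff_summable_sq {f : ∀ i, E i} : Memℓp f 2 ↔ Summable fun i => ‖f i‖ ^ 2 := by
  simp [memℓp_gen_iff (p := 2) (by norm_num)]

theorem lp.hasSum_norm_sq (f : lp E 2) : HasSum (fun i => ‖f i‖ ^ 2) (‖f‖ ^ 2) := by
  simpa using lp.hasSum_norm (p := 2) (by norm_num) f

end lpTwo

section lpMap

variable {R : Type*} [NormedField R] {α E F : Type*}
  [NormedAddCommGroup E] [NormedSpace R E] [NormedAddCommGroup F] [NormedSpace R F]
  {p : ℝ≥0∞} [Fact (1 ≤ p)]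

noncomputable def LinearIsometry.lpMap (f : E →ₗᵢ[R] F) :
    lp (fun _ : α => E) p →ₗᵢ[R] lp (fun _ : α => F) p where
  toFun a := ⟨fun i => f (a i), (lp.memℓp a).mono' fun i => (f.norm_map _).le⟩
  map_add' a b := by ext i; exact map_add f (a i) (b i)
  map_smul' c a := by ext i; exact map_smul f c (a i)
  norm_map' a := by
    rcases p.dichotomy with rfl | hp
    · simp [lp.norm_eq_ciSup]
    · simp [lp.norm_eq_tsum_rpow (zero_lt_one.trans_le hp)]

@[simp] theorem LinearIsometry.lpMap_apply (f : E →ₗᵢ[R] F) (a : lp (fun _ : α => E) p) (i : α) :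
    f.lpMap a i = f (a i) := rfl

end lpMap

theorem absContinuousReps_iff (ρ₁ : Γ →* (E₁ ≃ₗᵢ[𝕜] E₁)) (ρ₂ : Γ →* (E₂ ≃ₗᵢ[𝕜] E₂)) :
    AbsContinuousReps 𝕜 ρ₁ ρ₂ ↔ ∃ Φ : E₁ →ₗᵢ[𝕜] lp (fun _ : ℕ => E₂) 2,
      ∀ g v, Φ (ρ₁ g v) = (ρ₂ g).toLinearIsometry.lpMap (Φ v) := by
  simp only [AbsContinuousReps, lp.ext_iff, funext_iff]
  rfl

section Interleave

variable {X : Type*}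

def interleaveSeq (a b : ℕ → X) (k : ℕ) : X := if k % 2 = 0 then a (k / 2) else b (k / 2)

@[simp] theorem interleaveSeq_two_mul (a b : ℕ → X) (k : ℕ) : interleaveSeq a b (2 * k) = a k := by
  simp [interleaveSeq]

@[simp] theorem interleaveSeq_two_mul_add_one (a b : ℕ → X) (k : ℕ) :
    interleaveSeq a b (2 * k + 1) = b k := by
  simp [interleaveSeq, Nat.add_mod, Nat.add_div]

theorem comp_interleaveSeq {Y : Type*} (f : X → Y) (a b : ℕ → X) :
    (fun k => f (interleaveSeq a b k)) = interleaveSeq (fun n => f (a n)) (fun n => f (b n)) := by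
  funext k; simp only [interleaveSeq, apply_ite f]

theorem HasSum.interleaveSeq {M : Type*} [AddCommMonoid M] [TopologicalSpace M] [ContinuousAdd M]
    {a b : ℕ → M} {x y : M} (ha : HasSum a x) (hb : HasSum b y) :
    HasSum (interleaveSeq a b) (x + y) :=
  HasSum.even_add_odd (by simpa using ha) (by simpa using hb)

end Interleave

section Complexification

open Complex

theorem smul_add_I_smul {M : Type*} [AddCommGroup M] [Module ℂ M] (c : ℂ) (x y : M) :
    c • (x + I • y) = (c.re • x - c.im • y) + I • (c.im • x + c.re • y) := by
  conv_lhs => rw [← re_add_im c]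
  simp only [← Complex.coe_smul]
  match_scalars
  · ring
  · linear_combination (c.im : ℂ) * I_sq

variable {H Hc : Type*} [NormedAddCommGroup H] [InnerProductSpace ℝ H]
  [NormedAddCommGroup Hc] [InnerProductSpace ℂ Hc]

noncomputable def ofReIm (ι : H →ₗᵢ[ℝ] Hc) : H × H →ₗ[ℝ] Hc where
  toFun x := ι x.1 + I • ι x.2
  map_add' x y := by simp only [Prod.fst_add, Prod.snd_add, map_add, smul_add]; abel
  map_smul' r x := by simp [smul_add, smul_comm r I]

@[simp] theorem ofReIm_apply (ι : H →ₗᵢ[ℝ] Hc) (x : H × H) : ofReIm ι x = ι x.1 + I • ι x.2 :=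
  rfl

/-- `ι` identifies `Hc` with `H ⊗_ℝ ℂ`. -/
structure IsComplexification (ι : H →ₗᵢ[ℝ] Hc) : Prop where
  inner_map_map : ∀ u v, inner ℂ (ι u) (ι v) = (inner ℝ u v : ℂ)
  exists_eq : ∀ w, ∃ u v, w = ι u + I • ι v

namespace IsComplexification

variable {ι : H →ₗᵢ[ℝ] Hc} (h : IsComplexification ι)
include h

theorem norm_add_I_smul_sq (u v : H) : ‖ι u + I • ι v‖ ^ 2 = ‖u‖ ^ 2 + ‖v‖ ^ 2 := by
  rw [@norm_add_sq ℂ, inner_smul_right, h.inner_map_map, norm_smul]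
  simp

theorem injective_ofReIm : Function.Injective (ofReIm ι) := by
  refine (injective_iff_map_eq_zero _).2 fun x hx => ?_
  have hx' : ‖x.1‖ ^ 2 + ‖x.2‖ ^ 2 = 0 := by
    rw [← h.norm_add_I_smul_sq, ← ofReIm_apply, hx, norm_zero, sq, zero_mul]
  obtain ⟨h₁, h₂⟩ := (add_eq_zero_iff_of_nonneg (by positivity) (by positivity)).1 hx'
  exact Prod.ext (by simpa using h₁) (by simpa using h₂)

noncomputable def reImEquiv : (H × H) ≃ₗ[ℝ] Hc :=
  LinearEquiv.ofBijective (ofReIm ι) ⟨h.injective_ofReIm,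
    fun w => by obtain ⟨u, v, rfl⟩ := h.exists_eq w; exact ⟨(u, v), rfl⟩⟩

noncomputable def re : Hc →ₗ[ℝ] H := LinearMap.fst ℝ H H ∘ₗ h.reImEquiv.symm.toLinearMap

noncomputable def im : Hc →ₗ[ℝ] H := LinearMap.snd ℝ H H ∘ₗ h.reImEquiv.symm.toLinearMap

theorem re_add_I_smul_im (w : Hc) : ι (h.re w) + I • ι (h.im w) = w :=
  h.reImEquiv.apply_symm_apply w

theorem re_eq_and_im_eq {u v : H} {w : Hc} (hw : ι u + I • ι v = w) :
    h.re w = u ∧ h.im w = v := by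
  subst hw
  exact Prod.ext_iff.1 (h.reImEquiv.symm_apply_apply (u, v))

theorem norm_sq_eq (w : Hc) : ‖w‖ ^ 2 = ‖h.re w‖ ^ 2 + ‖h.im w‖ ^ 2 := by
  conv_lhs => rw [← h.re_add_I_smul_im w]
  exact h.norm_add_I_smul_sq _ _

theorem norm_re_le (w : Hc) : ‖h.re w‖ ≤ ‖w‖ :=
  (pow_le_pow_iff_left₀ (norm_nonneg _) (norm_nonneg _) two_ne_zero).1
    (by linarith [h.norm_sq_eq w, sq_nonneg ‖h.im w‖])

theorem norm_im_le (w : Hc) : ‖h.im w‖ ≤ ‖w‖ :=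
  (pow_le_pow_iff_left₀ (norm_nonneg _) (norm_nonneg _) two_ne_zero).1
    (by linarith [h.norm_sq_eq w, sq_nonneg ‖h.re w‖])

theorem re_smul_and_im_smul (c : ℂ) (w : Hc) :
    h.re (c • w) = c.re • h.re w - c.im • h.im w ∧
      h.im (c • w) = c.im • h.re w + c.re • h.im w := by
  refine h.re_eq_and_im_eq ?_
  rw [map_sub, map_add, map_smul, map_smul, map_smul, map_smul, ← smul_add_I_smul,
    h.re_add_I_smul_im]

theorem re_map_and_im_map {F : Type*} [FunLike F Hc Hc] [LinearMapClass F ℂ Hc Hc] (A : F)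
    (B : H → H) (hAB : ∀ u, A (ι u) = ι (B u)) (w : Hc) :
    h.re (A w) = B (h.re w) ∧ h.im (A w) = B (h.im w) :=
  h.re_eq_and_im_eq (by rw [← hAB, ← hAB, ← map_smul, ← map_add, h.re_add_I_smul_im])

section Extend

variable {K Kc : Type*} [NormedAddCommGroup K] [InnerProductSpace ℝ K]
  [NormedAddCommGroup Kc] [InnerProductSpace ℂ Kc] {j : K →ₗᵢ[ℝ] Kc} (hj : IsComplexification j)
include hj

noncomputable def extend (Φ : H →ₗᵢ[ℝ] K) : Hc →ₗᵢ[ℂ] Kc where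
  toFun w := j (Φ (h.re w)) + I • j (Φ (h.im w))
  map_add' w w' := by simp only [map_add, smul_add]; abel
  map_smul' c w := by
    obtain ⟨hre, him⟩ := h.re_smul_and_im_smul c w
    simp only [hre, him, map_sub, map_add, map_smul, RingHom.id_apply, smul_add_I_smul]
  norm_map' w := by
    rw [← sq_eq_sq₀ (norm_nonneg _) (norm_nonneg _), h.norm_sq_eq, ← Φ.norm_map, ← Φ.norm_map]
    exact hj.norm_add_I_smul_sq _ _

theorem extend_apply (Φ : H →ₗᵢ[ℝ] K) (w : Hc) :
    h.extend hj Φ w = j (Φ (h.re w)) + I • j (Φ (h.im w)) := rfl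

theorem extend_map {F G : Type*} [FunLike F Hc Hc] [LinearMapClass F ℂ Hc Hc]
    [FunLike G Kc Kc] [LinearMapClass G ℂ Kc Kc] (Φ : H →ₗᵢ[ℝ] K)
    (A : F) (B : H → H) (C : G) (D : K → K) (hAB : ∀ u, A (ι u) = ι (B u))
    (hCD : ∀ k, C (j k) = j (D k)) (hΦ : ∀ u, Φ (B u) = D (Φ u)) (w : Hc) :
    h.extend hj Φ (A w) = C (h.extend hj Φ w) := by
  obtain ⟨hre, him⟩ := h.re_map_and_im_map A B hAB w
  simp only [extend_apply, hre, him, hΦ, ← hCD, map_add, map_smul]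

end Extend

theorem memℓp_re {α : Type*} {p : ℝ≥0∞} [Fact (1 ≤ p)] (F : lp (fun _ : α => Hc) p) :
    Memℓp (fun i => h.re (F i)) p :=
  (lp.memℓp F).mono' fun i => h.norm_re_le (F i)

theorem memℓp_im {α : Type*} {p : ℝ≥0∞} [Fact (1 ≤ p)] (F : lp (fun _ : α => Hc) p) :
    Memℓp (fun i => h.im (F i)) p :=
  (lp.memℓp F).mono' fun i => h.norm_im_le (F i)

theorem lpMap (α : Type*) :
    IsComplexification (ι.lpMap : lp (fun _ : α => H) 2 →ₗᵢ[ℝ] lp (fun _ : α => Hc) 2) where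
  inner_map_map a b := by
    change inner ℂ (ι.lpMap a) (ι.lpMap b) = _
    simp [lp.inner_eq_tsum, h.inner_map_map, Complex.ofReal_tsum]
  exists_eq w := ⟨⟨_, h.memℓp_re w⟩, ⟨_, h.memℓp_im w⟩, by
    ext i
    exact (h.re_add_I_smul_im (w i)).symm⟩

theorem hasSum_norm_sq_interleaveSeq (F : lp (fun _ : ℕ => Hc) 2) :
    HasSum (fun k => ‖interleaveSeq (fun n => h.re (F n)) (fun n => h.im (F n)) k‖ ^ 2)
      (‖F‖ ^ 2) := by
  have hre := (memℓp_two_iff_summable_sq.1 (h.memℓp_re F)).hasSum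
  have him := (memℓp_two_iff_summable_sq.1 (h.memℓp_im F)).hasSum
  have hF := hre.add him
  simp only [← h.norm_sq_eq] at hF
  rw [(lp.hasSum_norm_sq F).unique hF]
  exact comp_interleaveSeq (fun x : H => ‖x‖ ^ 2) _ _ ▸ hre.interleaveSeq him

noncomputable def interleaveLp (F : lp (fun _ : ℕ => Hc) 2) : lp (fun _ : ℕ => H) 2 :=
  ⟨interleaveSeq (fun n => h.re (F n)) (fun n => h.im (F n)),
    memℓp_two_iff_summable_sq.2 (h.hasSum_norm_sq_interleaveSeq F).summable⟩

theorem interleaveLp_apply (F : lp (fun _ : ℕ => Hc) 2) (k : ℕ) :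
    h.interleaveLp F k = interleaveSeq (fun n => h.re (F n)) (fun n => h.im (F n)) k := rfl

noncomputable def interleave : lp (fun _ : ℕ => Hc) 2 →ₗᵢ[ℝ] lp (fun _ : ℕ => H) 2 where
  toFun := h.interleaveLp
  map_add' F G := by
    ext k
    simp only [interleaveLp_apply, lp.coeFn_add, Pi.add_apply]
    by_cases hk : k % 2 = 0 <;> simp [interleaveSeq, hk]
  map_smul' r F := by
    ext k
    simp only [interleaveLp_apply, lp.coeFn_smul, Pi.smul_apply, RingHom.id_apply]
    by_cases hk : k % 2 = 0 <;> simp [interleaveSeq, hk]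
  norm_map' F := by
    rw [← sq_eq_sq₀ (norm_nonneg _) (norm_nonneg _)]
    exact (lp.hasSum_norm_sq _).unique (h.hasSum_norm_sq_interleaveSeq F)

theorem interleave_apply (F : lp (fun _ : ℕ => Hc) 2) :
    h.interleave F = h.interleaveLp F := rfl

theorem interleave_lpMap (A : Hc →ₗᵢ[ℂ] Hc) (B : H →ₗᵢ[ℝ] H) (hAB : ∀ u, A (ι u) = ι (B u))
    (F : lp (fun _ : ℕ => Hc) 2) : h.interleave (A.lpMap F) = B.lpMap (h.interleave F) := by
  ext k
  simp only [interleave_apply, interleaveLp_apply, LinearIsometry.lpMap_apply]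
  unfold interleaveSeq
  split_ifs <;> simp [h.re_map_and_im_map A B hAB]

end IsComplexification

theorem isComplexification_ofRealLI : IsComplexification Complex.ofRealLI where
  inner_map_map x y := by simp
  exists_eq z := ⟨z.re, z.im, by simp [Complex.ext_iff]⟩

end Complexification

theorem leftRegularRep_lpMap_ofRealLI (g : Γ) (a : lp (fun _ : Γ => ℝ) 2) :
    leftRegularRep ℂ g (Complex.ofRealLI.lpMap a) =
      Complex.ofRealLI.lpMap (leftRegularRep ℝ g a) :=
  rfl

theorem complexification_absContinuous_leftRegular_iff_general
    {H Hc : Type*}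
    [NormedAddCommGroup H] [InnerProductSpace ℝ H]
    [NormedAddCommGroup Hc] [InnerProductSpace ℂ Hc]
    (ρ : Γ →* (H ≃ₗᵢ[ℝ] H)) (ι : H →ₗᵢ[ℝ] Hc)
    (hreal : ∀ u v : H, (inner (𝕜 := ℂ) (ι u) (ι v)) = ((inner (𝕜 := ℝ) u v : ℝ) : ℂ))
    (hspan : ∀ w : Hc, ∃ u v : H, w = ι u + Complex.I • ι v)
    (ρc : Γ →* (Hc ≃ₗᵢ[ℂ] Hc)) (hρc : ∀ (g : Γ) (v : H), ρc g (ι v) = ι (ρ g v)) :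
    AbsContinuousReps ℂ ρc (leftRegularRep ℂ) ↔ AbsContinuousReps ℝ ρ (leftRegularRep ℝ) := by
  have hι : IsComplexification ι := ⟨hreal, hspan⟩
  have hΓ := isComplexification_ofRealLI.lpMap Γ
  rw [absContinuousReps_iff, absContinuousReps_iff]
  constructor
  · rintro ⟨Ψ, hΨ⟩
    let Ψℝ : Hc →ₗᵢ[ℝ] lp (fun _ : ℕ => lp (fun _ : Γ => ℂ) 2) 2 :=
      ⟨Ψ.toLinearMap.restrictScalars ℝ, Ψ.norm_map⟩
    refine ⟨hΓ.interleave.comp (Ψℝ.comp ι), fun g u => ?_⟩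
    change hΓ.interleave (Ψ (ι (ρ g u))) = _
    rw [← hρc, hΨ, hΓ.interleave_lpMap (leftRegularRep ℂ g).toLinearIsometry
      (leftRegularRep ℝ g).toLinearIsometry (leftRegularRep_lpMap_ofRealLI g)]
    rfl
  · rintro ⟨Φ, hΦ⟩
    exact ⟨hι.extend (hΓ.lpMap ℕ) Φ, fun g => hι.extend_map (hΓ.lpMap ℕ) Φ (ρc g) (ρ g)
      (leftRegularRep ℂ g).toLinearIsometry.lpMap (leftRegularRep ℝ g).toLinearIsometry.lpMap
      (hρc g) (fun _ => rfl) (hΦ g)⟩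

/-- The complexification `ρ_ℂ` of an orthogonal representation `ρ` embeds into a countable
direct sum of copies of the complex left regular representation `λ_Γ` if and only if `ρ`
embeds into a countable direct sum of copies of the real left regular representation
`λ_{Γ,ℝ}`. -/
theorem complexification_absContinuous_leftRegular_iff [Countable Γ]
    {H Hc : Type*}
    [NormedAddCommGroup H] [InnerProductSpace ℝ H] [CompleteSpace H]
    [NormedAddCommGroup Hc] [InnerProductSpace ℂ Hc] [CompleteSpace Hc]
    (ρ : Γ →* (H ≃ₗᵢ[ℝ] H)) (ι : H →ₗᵢ[ℝ] Hc)
    (hreal : ∀ u v : H, (inner (𝕜 := ℂ) (ι u) (ι v)) = ((inner (𝕜 := ℝ) u v : ℝ) : ℂ))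
    (hspan : ∀ w : Hc, ∃ u v : H, w = ι u + Complex.I • ι v)
    (ρc : Γ →* (Hc ≃ₗᵢ[ℂ] Hc)) (hρc : ∀ (g : Γ) (v : H), ρc g (ι v) = ι (ρ g v)) :
    AbsContinuousReps ℂ ρc (leftRegularRep ℂ) ↔ AbsContinuousReps ℝ ρ (leftRegularRep ℝ) :=
  complexification_absContinuous_leftRegular_iff_general ρ ι hreal hspan ρc hρc

end
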